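/- arXiv:1702.02599 — 5 statements merged into one kernel-verified Lean document; each statement's English description precedes it below -/
import Mathlib

section
/- Let (ν_j) be a sequence of finite Borel measures on ℝ all supported in a compact interval [0,C], converging weakly to a finite measure ν, with ν_j(ℝ) ≤ V for all j. Suppose there is B > 0 such that exp(∫_{ℝ∖{0}} ln|t| dν_j(t)) ≥ B for all j. Then exp(∫_{ℝ∖{0}} ln|t| dν(t)) ≥ B and lim_{j→∞} ν_j({0}) = ν({0}). -/
/-!
Fix `R ≥ max C 1` and cut `log |t|` off below at `log ε` and above at `log R`:
`g_ε t = log (max ε (min |t| R))` is bounded continuous, equals `log ε ≤ 0` at the origin and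
dominates `log |t|` on the support away from it, so the determinant bound gives
`log B + log ε · μⱼ{0} ≤ ∫ g_ε dμⱼ`. Passing to the weak limit, with `limsup μⱼ{0} ≤ ν{0}` from the
portmanteau theorem, gives `log B ≤ ∫_{t ≠ 0} g_ε dν` for every `ε`, and Fatou's lemma applied to
`log R - g_ε` as `ε → 0` gives the integrability of `log |t|` and the determinant bound for `ν`.
Conversely, `∫ g_ε dν ≤ log ε · ν{0} + log R · ν(ℝ ∖ {0})`, so comparing `∫ g_ε dμⱼ` with its
limit bounds `log ε · (μⱼ{0} - ν{0})` eventually by a constant independent of `ε`; letting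
`log ε → -∞` gives `liminf μⱼ{0} ≥ ν{0}`.
-/

open MeasureTheory Filter Topology
open scoped BoundedContinuousFunction

namespace MeasureTheory

theorem integrable_and_le_integral_of_tendsto_of_le {α : Type*} [MeasurableSpace α]
    {μ : Measure α} [IsFiniteMeasure μ] {F : ℕ → α → ℝ} {f : α → ℝ} {M c : ℝ}
    (hF : ∀ n, Integrable (F n) μ) (hFM : ∀ n, ∀ᵐ x ∂μ, F n x ≤ M)
    (hlim : ∀ᵐ x ∂μ, Tendsto (fun n => F n x) atTop (𝓝 (f x)))
    (hc : ∀ n, c ≤ ∫ x, F n x ∂μ) : Integrable f μ ∧ c ≤ ∫ x, f x ∂μ := by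
  have hgapF_int (n : ℕ) : Integrable (fun x => M - F n x) μ := (integrable_const M).sub (hF n)
  have hgapF_nonneg (n : ℕ) : 0 ≤ᵐ[μ] fun x => M - F n x := by
    filter_upwards [hFM n] with x hx using sub_nonneg.2 hx
  have hgapF_le (n : ℕ) : ∫ x, (M - F n x) ∂μ ≤ μ.real Set.univ * M - c := by
    rw [integral_sub (integrable_const M) (hF n), integral_const, smul_eq_mul]
    linarith [hc n]
  have hgap_nonneg : 0 ≤ᵐ[μ] fun x => M - f x := by
    filter_upwards [hlim, ae_all_iff.2 hFM] with x hx hxM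
    exact sub_nonneg.2 (le_of_tendsto' hx hxM)
  have hfatou : ∫⁻ x, ENNReal.ofReal (M - f x) ∂μ ≤ ENNReal.ofReal (μ.real Set.univ * M - c) :=
    calc ∫⁻ x, ENNReal.ofReal (M - f x) ∂μ
        = ∫⁻ x, liminf (fun n => ENNReal.ofReal (M - F n x)) atTop ∂μ := by
          refine lintegral_congr_ae ?_
          filter_upwards [hlim] with x hx
          exact ((ENNReal.tendsto_ofReal (tendsto_const_nhds.sub hx)).liminf_eq).symm
      _ ≤ liminf (fun n => ∫⁻ x, ENNReal.ofReal (M - F n x) ∂μ) atTop :=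
          lintegral_liminf_le' fun n => (hgapF_int n).aemeasurable.ennreal_ofReal
      _ ≤ ENNReal.ofReal (μ.real Set.univ * M - c) := by
          refine liminf_le_of_frequently_le' (Frequently.of_forall fun n => ?_)
          rw [← ofReal_integral_eq_lintegral_ofReal (hgapF_int n) (hgapF_nonneg n)]
          exact ENNReal.ofReal_le_ofReal (hgapF_le n)
  have hf : AEStronglyMeasurable f μ :=
    aestronglyMeasurable_of_tendsto_ae _ (fun n => (hF n).aestronglyMeasurable) hlim
  have hgap : Integrable (fun x => M - f x) μ :=
    ⟨aestronglyMeasurable_const.sub hf,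
      (hasFiniteIntegral_iff_ofReal hgap_nonneg).2 (hfatou.trans_lt ENNReal.ofReal_lt_top)⟩
  have hint : Integrable f μ :=
    ((integrable_const M).sub hgap).congr (ae_of_all _ fun x => sub_sub_cancel M (f x))
  have hgap_le : ∫ x, (M - f x) ∂μ ≤ μ.real Set.univ * M - c := by
    rw [integral_eq_lintegral_of_nonneg_ae hgap_nonneg hgap.aestronglyMeasurable]
    exact ENNReal.toReal_le_of_le_ofReal
      ((integral_nonneg_of_ae (hgapF_nonneg 0)).trans (hgapF_le 0)) hfatou
  rw [integral_sub (integrable_const M) hint, integral_const, smul_eq_mul] at hgap_le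
  exact ⟨hint, by linarith⟩

theorem integral_eq_measureReal_singleton_mul_add_setIntegral_compl {α : Type*}
    [MeasurableSpace α] [MeasurableSingletonClass α] {μ : Measure α} {f : α → ℝ}
    (hf : Integrable f μ) (a : α) :
    ∫ x, f x ∂μ = μ.real {a} * f a + ∫ x in {a}ᶜ, f x ∂μ := by
  rw [← integral_add_compl (measurableSet_singleton a) hf, integral_singleton, smul_eq_mul]

namespace FiniteMeasure

variable {Ω ι : Type*} [MeasurableSpace Ω] [TopologicalSpace Ω] [HasOuterApproxClosed Ω]
  [OpensMeasurableSpace Ω] {L : Filter ι} {μs : ι → FiniteMeasure Ω} {μ : FiniteMeasure Ω}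

theorem ae_mem_of_tendsto [L.NeBot] (h : Tendsto μs L (𝓝 μ)) {F : Set Ω} (hF : IsClosed F)
    (hμs : ∀ i, ∀ᵐ x ∂(μs i : Measure Ω), x ∈ F) : ∀ᵐ x ∂(μ : Measure Ω), x ∈ F := by
  rw [ae_iff_measure_eq (p := (· ∈ F)) hF.measurableSet.nullMeasurableSet]
  refine le_antisymm (measure_mono (Set.subset_univ F)) ?_
  have hmass : Tendsto (fun i => (μs i : Measure Ω) F) L (𝓝 ((μ : Measure Ω) Set.univ)) := by
    have h' := (ENNReal.continuous_coe.tendsto _).comp ((continuous_mass.tendsto μ).comp h)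
    simp only [Function.comp_def, ennreal_mass] at h'
    refine h'.congr fun i => ?_
    exact ((ae_iff_measure_eq (p := (· ∈ F)) hF.measurableSet.nullMeasurableSet).1 (hμs i)).symm
  rw [← hmass.limsup_eq]
  exact limsup_measure_closed_le_of_tendsto h hF

theorem eventually_measureReal_lt_of_tendsto (h : Tendsto μs L (𝓝 μ)) {F : Set Ω}
    (hF : IsClosed F) {b : ℝ} (hb : (μ : Measure Ω).real F < b) :
    ∀ᶠ i in L, (μs i : Measure Ω).real F < b := by
  have hlt : L.limsup (fun i => (μs i : Measure Ω) F) < ENNReal.ofReal b :=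
    (limsup_measure_closed_le_of_tendsto h hF).trans_lt
      ((ENNReal.lt_ofReal_iff_toReal_lt (measure_ne_top _ _)).2 hb)
  filter_upwards [eventually_lt_of_limsup_lt hlt] with i hi
  exact ENNReal.toReal_lt_of_lt_ofReal hi

end FiniteMeasure

end MeasureTheory

noncomputable def logClamp {ε R : ℝ} (hε : 0 < ε) (hεR : ε ≤ R) : ℝ →ᵇ ℝ :=
  .mkOfBound ⟨fun t => Real.log (max ε (min |t| R)),
      (continuous_const.max (continuous_abs.min continuous_const)).log
        fun t => (hε.trans_le (le_max_left _ _)).ne'⟩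
    (Real.log R - Real.log ε) fun x y => by
      have hbounds (t : ℝ) : Real.log ε ≤ Real.log (max ε (min |t| R)) ∧
          Real.log (max ε (min |t| R)) ≤ Real.log R :=
        ⟨Real.log_le_log hε (le_max_left _ _),
          Real.log_le_log (hε.trans_le (le_max_left _ _)) (max_le hεR (min_le_right _ _))⟩
      simp only [ContinuousMap.coe_mk, Real.dist_eq, abs_sub_le_iff]
      constructor <;> linarith [hbounds x, hbounds y]

section logClamp

variable {ε R : ℝ} (hε : 0 < ε) (hεR : ε ≤ R)

theorem logClamp_apply (t : ℝ) : logClamp hε hεR t = Real.log (max ε (min |t| R)) := rfl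

theorem logClamp_zero : logClamp hε hεR 0 = Real.log ε := by
  rw [logClamp_apply, abs_zero, min_eq_left (hε.le.trans hεR), max_eq_left hε.le]

theorem logClamp_le (t : ℝ) : logClamp hε hεR t ≤ Real.log R :=
  Real.log_le_log (hε.trans_le (le_max_left _ _)) (max_le hεR (min_le_right _ _))

theorem log_abs_le_logClamp {t : ℝ} (ht : t ≠ 0) (htR : |t| ≤ R) :
    Real.log |t| ≤ logClamp hε hεR t := by
  rw [logClamp_apply, min_eq_left htR]
  exact Real.log_le_log (abs_pos.2 ht) (le_max_right _ _)

theorem logClamp_eq_log_abs {t : ℝ} (hεt : ε ≤ |t|) (htR : |t| ≤ R) :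
    logClamp hε hεR t = Real.log |t| := by
  rw [logClamp_apply, min_eq_left htR, max_eq_right hεt]

theorem integral_logClamp_eq (m : Measure ℝ) [IsFiniteMeasure m] :
    ∫ t, logClamp hε hεR t ∂m =
      Real.log ε * m.real {0} + ∫ t in {0}ᶜ, logClamp hε hεR t ∂m := by
  rw [integral_eq_measureReal_singleton_mul_add_setIntegral_compl ((logClamp hε hεR).integrable m),
    logClamp_zero, mul_comm]

theorem le_integral_logClamp {m : Measure ℝ} [IsFiniteMeasure m] {c : ℝ}
    (hmR : ∀ᵐ t ∂m, |t| ≤ R) (hint : IntegrableOn (fun t => Real.log |t|) {0}ᶜ m)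
    (hc : c ≤ ∫ t in {0}ᶜ, Real.log |t| ∂m) :
    c + Real.log ε * m.real {0} ≤ ∫ t, logClamp hε hεR t ∂m := by
  have hmono : ∫ t in {0}ᶜ, Real.log |t| ∂m ≤ ∫ t in {0}ᶜ, logClamp hε hεR t ∂m := by
    refine setIntegral_mono_on_ae hint ((logClamp hε hεR).integrable m).integrableOn
      (measurableSet_singleton 0).compl ?_
    filter_upwards [hmR] with t htR ht using log_abs_le_logClamp hε hεR ht htR
  rw [integral_logClamp_eq]
  linarith

theorem integral_logClamp_le (m : Measure ℝ) [IsFiniteMeasure m] :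
    ∫ t, logClamp hε hεR t ∂m ≤ Real.log ε * m.real {0} + Real.log R * m.real {0}ᶜ := by
  have hle : ∫ t in {0}ᶜ, logClamp hε hεR t ∂m ≤ ∫ _ in {0}ᶜ, Real.log R ∂m :=
    setIntegral_mono ((logClamp hε hεR).integrable m).integrableOn integrableOn_const
      (logClamp_le hε hεR)
  rw [setIntegral_const, smul_eq_mul] at hle
  rw [integral_logClamp_eq]
  linarith

end logClamp

section WeakLimit

variable {μ : ℕ → FiniteMeasure ℝ} {ν : FiniteMeasure ℝ} {R c : ℝ}

theorem le_setIntegral_logClamp_of_tendsto (hlim : Tendsto μ atTop (𝓝 ν))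
    (hμR : ∀ j, ∀ᵐ t ∂(μ j : Measure ℝ), |t| ≤ R)
    (hint : ∀ j, IntegrableOn (fun t => Real.log |t|) {0}ᶜ (μ j))
    (hc : ∀ j, c ≤ ∫ t in {0}ᶜ, Real.log |t| ∂(μ j : Measure ℝ))
    {ε : ℝ} (hε : 0 < ε) (hε1 : ε ≤ 1) (hεR : ε ≤ R) :
    c ≤ ∫ t in {0}ᶜ, logClamp hε hεR t ∂(ν : Measure ℝ) := by
  set a := (ν : Measure ℝ).real {0}
  have hlog : Real.log ε ≤ 0 := Real.log_nonpos hε.le hε1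
  have hbound (η : ℝ) (hη : 0 < η) :
      c + Real.log ε * (a + η) ≤ ∫ t, logClamp hε hεR t ∂(ν : Measure ℝ) := by
    refine ge_of_tendsto (FiniteMeasure.tendsto_iff_forall_integral_tendsto.1 hlim _) ?_
    filter_upwards [FiniteMeasure.eventually_measureReal_lt_of_tendsto hlim isClosed_singleton
      (lt_add_of_pos_right a hη)] with j hj
    calc c + Real.log ε * (a + η)
        ≤ c + Real.log ε * (μ j : Measure ℝ).real {0} :=
          add_le_add_right (mul_le_mul_of_nonpos_left hj.le hlog) c
      _ ≤ _ := le_integral_logClamp hε hεR (hμR j) (hint j) (hc j)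
  have hlim_η : Tendsto (fun η => c + Real.log ε * (a + η)) (𝓝[>] 0)
      (𝓝 (c + Real.log ε * a)) := by
    exact (Continuous.tendsto' (by fun_prop) 0 _ (by simp)).mono_left nhdsWithin_le_nhds
  have := le_of_tendsto hlim_η (eventually_nhdsWithin_of_forall hbound)
  rw [integral_logClamp_eq] at this
  linarith

theorem integrableOn_log_abs_and_le_setIntegral_of_tendsto (hlim : Tendsto μ atTop (𝓝 ν))
    (hμR : ∀ j, ∀ᵐ t ∂(μ j : Measure ℝ), |t| ≤ R)
    (hint : ∀ j, IntegrableOn (fun t => Real.log |t|) {0}ᶜ (μ j))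
    (hc : ∀ j, c ≤ ∫ t in {0}ᶜ, Real.log |t| ∂(μ j : Measure ℝ)) (hR : 1 ≤ R) :
    IntegrableOn (fun t => Real.log |t|) {0}ᶜ ν ∧
      c ≤ ∫ t in {0}ᶜ, Real.log |t| ∂(ν : Measure ℝ) := by
  have hε (n : ℕ) : (0 : ℝ) < 1 / (n + 1) := Nat.one_div_pos_of_nat
  have hε1 (n : ℕ) : 1 / ((n : ℝ) + 1) ≤ 1 :=
    div_le_one_of_le₀ (le_add_of_nonneg_left n.cast_nonneg) (by positivity)
  have hνR : ∀ᵐ t ∂(ν : Measure ℝ), |t| ≤ R :=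
    FiniteMeasure.ae_mem_of_tendsto hlim (isClosed_le continuous_abs continuous_const) hμR
  refine integrable_and_le_integral_of_tendsto_of_le (M := Real.log R)
    (F := fun n => logClamp (hε n) ((hε1 n).trans hR))
    (fun n => (logClamp _ _).integrable _) (fun n => ae_of_all _ (logClamp_le _ _)) ?_
    (fun n => le_setIntegral_logClamp_of_tendsto hlim hμR hint hc (hε n) (hε1 n) _)
  filter_upwards [ae_restrict_of_ae hνR, ae_restrict_mem (measurableSet_singleton 0).compl]
    with t htR ht
  refine tendsto_const_nhds.congr' ?_
  filter_upwards [tendsto_one_div_add_atTop_nhds_zero_nat.eventually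
    (ge_mem_nhds (abs_pos.2 ht))] with n hn
  exact (logClamp_eq_log_abs _ _ hn htR).symm

theorem tendsto_measureReal_zero_of_tendsto (hlim : Tendsto μ atTop (𝓝 ν))
    (hμR : ∀ j, ∀ᵐ t ∂(μ j : Measure ℝ), |t| ≤ R)
    (hint : ∀ j, IntegrableOn (fun t => Real.log |t|) {0}ᶜ (μ j))
    (hc : ∀ j, c ≤ ∫ t in {0}ᶜ, Real.log |t| ∂(μ j : Measure ℝ)) (hR : 1 ≤ R) :
    Tendsto (fun j => (μ j : Measure ℝ).real {0}) atTop (𝓝 ((ν : Measure ℝ).real {0})) := by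
  set a := (ν : Measure ℝ).real {0}
  refine tendsto_order.2 ⟨fun b hb => ?_,
    fun b hb => FiniteMeasure.eventually_measureReal_lt_of_tendsto hlim isClosed_singleton hb⟩
  set K := Real.log R * (ν : Measure ℝ).real {0}ᶜ - c + 1
  set L := max 1 (K / (a - b))
  have hL : 0 < L := zero_lt_one.trans_le (le_max_left _ _)
  have hKL : K ≤ L * (a - b) := (div_le_iff₀ (sub_pos.2 hb)).1 (le_max_right _ _)
  have hε : 0 < Real.exp (-L) := Real.exp_pos _
  have hε1 : Real.exp (-L) ≤ 1 := Real.exp_le_one_iff.2 (neg_nonpos.2 hL.le)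
  have hεR := hε1.trans hR
  have hν := integral_logClamp_le hε hεR (ν : Measure ℝ)
  filter_upwards [(FiniteMeasure.tendsto_iff_forall_integral_tendsto.1 hlim
    (logClamp hε hεR)).eventually_lt_const (lt_add_one _)] with j hj
  have hμ := le_integral_logClamp hε hεR (hμR j) (hint j) (hc j)
  rw [Real.log_exp] at hν hμ
  -- with `log ε = -L`, `hμ`, `hj` and `hν` give `L * (a - μⱼ{0}) < K ≤ L * (a - b)`
  have : L * (a - (μ j : Measure ℝ).real {0}) < L * (a - b) := by linarith
  linarith [lt_of_mul_lt_mul_left this hL.le]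

end WeakLimit

theorem stmt6_general (μ : ℕ → Measure ℝ) (ν : Measure ℝ)
    [∀ j, IsFiniteMeasure (μ j)] [IsFiniteMeasure ν]
    (C : ℝ) (hsupp : ∀ j, μ j (Set.Icc 0 C)ᶜ = 0)
    (hweak : ∀ f : BoundedContinuousFunction ℝ ℝ,
      Tendsto (fun j => ∫ t, f t ∂(μ j)) atTop (nhds (∫ t, f t ∂ν)))
    (B : ℝ) (hB : 0 < B)
    (hint : ∀ j, IntegrableOn (fun t => Real.log |t|) {0}ᶜ (μ j))
    (hdet : ∀ j, B ≤ Real.exp (∫ t in ({0}ᶜ : Set ℝ), Real.log |t| ∂(μ j))) :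
    (IntegrableOn (fun t => Real.log |t|) {0}ᶜ ν ∧
      B ≤ Real.exp (∫ t in ({0}ᶜ : Set ℝ), Real.log |t| ∂ν)) ∧
    Tendsto (fun j => ((μ j) {0}).toReal) atTop (nhds ((ν {0}).toReal)) := by
  have hlim : Tendsto (β := FiniteMeasure ℝ) (fun j => ⟨μ j, inferInstance⟩) atTop
      (𝓝 ⟨ν, inferInstance⟩) :=
    FiniteMeasure.tendsto_iff_forall_integral_tendsto.2 hweak
  have hμR (j : ℕ) : ∀ᵐ t ∂μ j, |t| ≤ max C 1 := by
    filter_upwards [ae_iff.2 (hsupp j)] with t ht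
    exact abs_le.2 ⟨by linarith [ht.1, le_max_right C 1], ht.2.trans (le_max_left C 1)⟩
  have hc (j : ℕ) := (Real.log_le_iff_le_exp hB).2 (hdet j)
  obtain ⟨hνint, hνc⟩ :=
    integrableOn_log_abs_and_le_setIntegral_of_tendsto hlim hμR hint hc (le_max_right C 1)
  exact ⟨⟨hνint, (Real.log_le_iff_le_exp hB).1 hνc⟩,
    tendsto_measureReal_zero_of_tendsto hlim hμR hint hc (le_max_right C 1)⟩

theorem stmt6 (μ : ℕ → Measure ℝ) (ν : Measure ℝ)
    [∀ j, IsFiniteMeasure (μ j)] [IsFiniteMeasure ν]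
    (C : ℝ) (hC : 0 < C) (hsupp : ∀ j, μ j (Set.Icc 0 C)ᶜ = 0)
    (V : ℝ) (hV : ∀ j, ((μ j) Set.univ).toReal ≤ V)
    (hweak : ∀ f : BoundedContinuousFunction ℝ ℝ,
      Tendsto (fun j => ∫ t, f t ∂(μ j)) atTop (nhds (∫ t, f t ∂ν)))
    (B : ℝ) (hB : 0 < B)
    (hint : ∀ j, IntegrableOn (fun t => Real.log |t|) {0}ᶜ (μ j))
    (hdet : ∀ j, B ≤ Real.exp (∫ t in ({0}ᶜ : Set ℝ), Real.log |t| ∂(μ j))) :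
    (IntegrableOn (fun t => Real.log |t|) {0}ᶜ ν ∧
      B ≤ Real.exp (∫ t in ({0}ᶜ : Set ℝ), Real.log |t| ∂ν)) ∧
    Tendsto (fun j => ((μ j) {0}).toReal) atTop (nhds ((ν {0}).toReal)) :=
  stmt6_general μ ν C hsupp hweak B hB hint hdet
end

section
/- Let A be an N×N positive semidefinite matrix over the ring of integers 𝒪_F of a number field F of degree d = [F:ℚ] (via an embedding ι : F → ℂ), acting on a free 𝒪_F-module of rank N. Suppose all archimedean embeddings v of F satisfy ‖A‖_v ≤ c for some c ≥ 1, where ‖A‖_v is the operator norm of A under v. If A ≠ 0, then the product of the nonzero eigenvalues of ι(A) has absolute value at least c^{-(d-1)N}. -/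
/-! The lowest nonzero coefficient `t` of the characteristic polynomial of `A` is a nonzero
algebraic integer. Under each complex embedding `v`, `|v t|` is the product of the nonzero
eigenvalues of `v A`, hence at most `c ^ N`. As `∏ v, |v t| = |N_{F/ℚ} t|` is a nonzero integer,
the factor at `ι` is at least `c ^ (-(d - 1) N)`. -/

open Polynomial
open scoped ComplexOrder NumberField

namespace Polynomial

variable {R S : Type*}

theorem natTrailingDegree_map_of_injective [Semiring R] [Semiring S] {f : R →+* S}
    (hf : Function.Injective f) (p : R[X]) :
    (p.map f).natTrailingDegree = p.natTrailingDegree := by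
  simp only [natTrailingDegree, trailingDegree, support_map_of_injective p hf]

theorem trailingCoeff_map_of_injective [Semiring R] [Semiring S] {f : R →+* S}
    (hf : Function.Injective f) (p : R[X]) :
    (p.map f).trailingCoeff = f p.trailingCoeff := by
  rw [trailingCoeff, natTrailingDegree_map_of_injective hf, coeff_map, trailingCoeff]

theorem trailingCoeff_X_sub_C [Ring R] [Nontrivial R] [DecidableEq R] (a : R) :
    (X - C a).trailingCoeff = if a ≠ 0 then -a else 1 := by
  split_ifs with ha
  · rw [trailingCoeff_eq_coeff_zero] <;> simp [ha]
  · simp only [not_not.mp ha, map_zero, sub_zero]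
    rw [trailingCoeff, natTrailingDegree_X, coeff_X_one]

theorem trailingCoeff_prod [CommSemiring R] [NoZeroDivisors R] {ι : Type*} (s : Finset ι)
    (p : ι → R[X]) : (∏ i ∈ s, p i).trailingCoeff = ∏ i ∈ s, (p i).trailingCoeff := by
  classical
  induction s using Finset.induction_on with
  | empty =>
    rw [Finset.prod_empty, Finset.prod_empty, trailingCoeff, natTrailingDegree_one, coeff_one_zero]
  | insert i s hi ih => rw [Finset.prod_insert hi, Finset.prod_insert hi, trailingCoeff_mul, ih]

theorem trailingCoeff_prod_X_sub_C [CommRing R] [IsDomain R] [DecidableEq R] {ι : Type*}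
    (s : Finset ι) (a : ι → R) :
    (∏ i ∈ s, (X - C (a i))).trailingCoeff = ∏ i ∈ s with a i ≠ 0, -a i := by
  rw [trailingCoeff_prod, Finset.prod_filter]
  exact Finset.prod_congr rfl fun i _ => trailingCoeff_X_sub_C (a i)

end Polynomial

theorem Matrix.PosSemidef.norm_trailingCoeff_charpoly {𝕜 n : Type*} [RCLike 𝕜] [Fintype n]
    [DecidableEq n] {A : Matrix n n 𝕜} (hA : A.PosSemidef) :
    ‖A.charpoly.trailingCoeff‖ =
      ∏ i with hA.isHermitian.eigenvalues i ≠ 0, hA.isHermitian.eigenvalues i := by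
  classical
  rw [hA.isHermitian.charpoly_eq, trailingCoeff_prod_X_sub_C, norm_prod]
  simp only [ne_eq, RCLike.ofReal_eq_zero, norm_neg, RCLike.norm_ofReal]
  exact Finset.prod_congr rfl fun i _ => abs_of_nonneg (hA.eigenvalues_nonneg i)

theorem Matrix.PosSemidef.prod_nonzero_eigenvalues_le {𝕜 n : Type*} [RCLike 𝕜] [Fintype n]
    [DecidableEq n] {A : Matrix n n 𝕜} (hA : A.PosSemidef) {c : ℝ} (hc : 1 ≤ c)
    (hle : ∀ i, hA.isHermitian.eigenvalues i ≤ c) :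
    ∏ i with hA.isHermitian.eigenvalues i ≠ 0, hA.isHermitian.eigenvalues i ≤
      c ^ Fintype.card n :=
  calc _ ≤ ∏ i with hA.isHermitian.eigenvalues i ≠ 0, c :=
        Finset.prod_le_prod (fun i _ => hA.eigenvalues_nonneg i) fun i _ => hle i
    _ = c ^ (Finset.univ.filter fun i => hA.isHermitian.eigenvalues i ≠ 0).card :=
        Finset.prod_const c
    _ ≤ c ^ Fintype.card n := pow_le_pow_right₀ hc (Finset.card_filter_le _ _)

theorem NumberField.one_le_prod_norm_embeddings {K : Type*} [Field K] [NumberField K]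
    {a : 𝓞 K} (ha : a ≠ 0) : 1 ≤ ∏ v : K →+* ℂ, ‖v a‖ := by
  have hprod : ∏ v : K →+* ℂ, ‖v a‖ = |(Algebra.norm ℚ (a : K) : ℝ)| := by
    rw [Fintype.prod_equiv (RingHom.equivRatAlgHom K ℂ) (fun v => ‖v a‖) (fun σ => ‖σ a‖)
        fun _ => rfl,
      ← norm_prod, ← Algebra.norm_eq_prod_embeddings ℚ ℂ, eq_ratCast, ← Complex.ofReal_ratCast,
      Complex.norm_real, Real.norm_eq_abs]
  rw [hprod, ← Algebra.coe_norm_int, Rat.cast_intCast, ← Int.cast_abs, ← Int.cast_one,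
    Int.cast_le]
  exact Int.one_le_abs (Algebra.norm_ne_zero_iff.mpr ha)

theorem inv_pow_card_sub_one_le_of_one_le_prod {ι : Type*} [Fintype ι] [DecidableEq ι]
    {x : ι → ℝ} {B : ℝ} (hx : ∀ i, 0 ≤ x i) (hB : ∀ i, x i ≤ B) (hprod : 1 ≤ ∏ i, x i)
    (i₀ : ι) : (B ^ (Fintype.card ι - 1))⁻¹ ≤ x i₀ := by
  have hrest : ∏ i ∈ Finset.univ.erase i₀, x i ≤ B ^ (Fintype.card ι - 1) := by
    rw [← Finset.card_univ, ← Finset.card_erase_of_mem (Finset.mem_univ i₀), ← Finset.prod_const]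
    exact Finset.prod_le_prod (fun i _ => hx i) fun i _ => hB i
  have hone : 1 ≤ B ^ (Fintype.card ι - 1) * x i₀ :=
    calc 1 ≤ ∏ i, x i := hprod
      _ = x i₀ * ∏ i ∈ Finset.univ.erase i₀, x i := (Finset.mul_prod_erase _ _ (by simp)).symm
      _ ≤ B ^ (Fintype.card ι - 1) * x i₀ := by rw [mul_comm]; gcongr; exact hx i₀
  have hpos : 0 < B ^ (Fintype.card ι - 1) :=
    pos_of_mul_pos_left (one_pos.trans_le hone) (hx i₀)
  exact (inv_le_iff_one_le_mul₀' hpos).mpr hone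

open scoped Classical in
theorem stmt8_general (F : Type*) [Field F] [NumberField F] (N : ℕ)
    (A : Matrix (Fin N) (Fin N) (NumberField.RingOfIntegers F))
    (c : ℝ) (hc : 1 ≤ c) (ι : F →+* ℂ)
    (hpsd : ∀ v : F →+* ℂ,
      (A.map (fun a => v (algebraMap (NumberField.RingOfIntegers F) F a))).PosSemidef)
    (hnorm : ∀ (v : F →+* ℂ) (i : Fin N), (hpsd v).isHermitian.eigenvalues i ≤ c) :
    c ^ (-(((Module.finrank ℚ F : ℝ) - 1) * N)) ≤
      |∏ i ∈ Finset.univ.filter (fun i => (hpsd ι).isHermitian.eigenvalues i ≠ 0),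
          (hpsd ι).isHermitian.eigenvalues i| := by
  set t := A.charpoly.trailingCoeff
  have ht : t ≠ 0 := trailingCoeff_nonzero_iff_nonzero.mpr A.charpoly_monic.ne_zero
  have hembed (v : F →+* ℂ) : ‖v t‖ =
      ∏ i ∈ Finset.univ.filter (fun i => (hpsd v).isHermitian.eigenvalues i ≠ 0),
        (hpsd v).isHermitian.eigenvalues i := by
    have hinj : Function.Injective (v.comp (algebraMap (𝓞 F) F)) :=
      v.injective.comp NumberField.RingOfIntegers.coe_injective
    rw [← (hpsd v).norm_trailingCoeff_charpoly]
    change _ = ‖(A.map (v.comp (algebraMap (𝓞 F) F))).charpoly.trailingCoeff‖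
    rw [Matrix.charpoly_map, trailingCoeff_map_of_injective hinj]
    rfl
  calc c ^ (-(((Module.finrank ℚ F : ℝ) - 1) * N))
      = ((c ^ N) ^ (Fintype.card (F →+* ℂ) - 1))⁻¹ := by
        rw [NumberField.Embeddings.card, ← pow_mul, Real.rpow_neg (by positivity),
          ← Real.rpow_natCast, Nat.cast_mul, Nat.cast_sub Module.finrank_pos, Nat.cast_one,
          mul_comm]
    _ ≤ ‖ι t‖ := inv_pow_card_sub_one_le_of_one_le_prod (fun _ => norm_nonneg _)
        (fun v => (hembed v).trans_le <| by
          simpa only [Fintype.card_fin] using (hpsd v).prod_nonzero_eigenvalues_le hc (hnorm v))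
        (NumberField.one_le_prod_norm_embeddings ht) ι
    _ = _ := by rw [← hembed ι, abs_norm]

open scoped Classical in
theorem stmt8 (F : Type*) [Field F] [NumberField F] (N : ℕ)
    (A : Matrix (Fin N) (Fin N) (NumberField.RingOfIntegers F))
    (c : ℝ) (hc : 1 ≤ c) (ι : F →+* ℂ)
    (hpsd : ∀ v : F →+* ℂ,
      (A.map (fun a => v (algebraMap (NumberField.RingOfIntegers F) F a))).PosSemidef)
    (hnorm : ∀ (v : F →+* ℂ) (i : Fin N), (hpsd v).isHermitian.eigenvalues i ≤ c)
    (hA : A ≠ 0) :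
    c ^ (-(((Module.finrank ℚ F : ℝ) - 1) * N)) ≤
      |∏ i ∈ Finset.univ.filter (fun i => (hpsd ι).isHermitian.eigenvalues i ≠ 0),
          (hpsd ι).isHermitian.eigenvalues i| :=
  stmt8_general F N A c hc ι hpsd hnorm
end

section
/- Let G be a group, H a finite group, φ a character of H and ψ a character of G × H (functions of positive type, constant on conjugacy classes, with value 1 at the identity). Suppose B := Σ_{h∈H} ψ(1,h) φ(h) ≠ 0. Then the function g ↦ B^{-1} Σ_{h∈H} ψ(g,h) φ(h) is a character of G. -/
/-!
Put `χ (g, h) = ψ (g, h) * φ h`. By the Schur product theorem the kernel matrices of `χ` are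
positive semidefinite, so `χ` is of positive type on `G × H`. Summing over the finite factor,
`g ↦ ∑ h, χ (g, h)` is of positive type on `G`: its quadratic form at the points `g i` is, up to the
factor `|H|`, the form of `χ` at the points `(g i, h)`. Its value at `1` is `B`, hence `B ≥ 0`, and
rescaling by `B⁻¹` keeps positivity and normalizes the value at `1`. Conjugation invariance is
inherited from that of `ψ` under `(k, 1)`.
-/

open scoped ComplexOrder

/-- A function `φ : G → ℂ` is of positive type if for every finite list of
group elements the matrix `(φ (g i⁻¹ * g j))` is positive semidefinite. -/
def IsPositiveType {G : Type*} [Group G] (φ : G → ℂ) : Prop :=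
  ∀ (n : ℕ) (g : Fin n → G) (c : Fin n → ℂ),
    0 ≤ ∑ i : Fin n, ∑ j : Fin n, (starRingEnd ℂ) (c i) * c j * φ ((g i)⁻¹ * g j)

/-- A character of a group is a function of positive type which is constant on
conjugacy classes and takes the value `1` at the identity. -/
def IsCharacter {K : Type*} [Group K] (φ : K → ℂ) : Prop :=
  IsPositiveType φ ∧ (∀ g k : K, φ (k * g * k⁻¹) = φ g) ∧ φ 1 = 1

open Matrix

section PositiveType

variable {K : Type*} [Group K] {φ ψ : K → ℂ} {ι : Type*}

def kernelMatrix (φ : K → ℂ) (g : ι → K) : Matrix ι ι ℂ :=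
  Matrix.of fun i j => φ ((g i)⁻¹ * g j)

lemma star_dotProduct_kernelMatrix_mulVec [Fintype ι] (φ : K → ℂ) (g : ι → K) (c : ι → ℂ) :
    star c ⬝ᵥ (kernelMatrix φ g *ᵥ c) =
      ∑ i, ∑ j, (starRingEnd ℂ) (c i) * c j * φ ((g i)⁻¹ * g j) := by
  simp only [dotProduct, mulVec, kernelMatrix, of_apply, Pi.star_apply, Complex.star_def,
    Finset.mul_sum]
  exact Fintype.sum_congr _ _ fun i => Fintype.sum_congr _ _ fun j => by ring

lemma isPositiveType_of_posSemidef
    (h : ∀ (n : ℕ) (g : Fin n → K), (kernelMatrix φ g).PosSemidef) : IsPositiveType φ :=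
  fun n g c => star_dotProduct_kernelMatrix_mulVec φ g c ▸ (h n g).dotProduct_mulVec_nonneg c

namespace IsPositiveType

lemma apply_one_nonneg (hφ : IsPositiveType φ) : 0 ≤ φ 1 := by
  simpa using hφ 1 (fun _ => 1) (fun _ => 1)

lemma apply_inv (hφ : IsPositiveType φ) (x : K) : φ x⁻¹ = (starRingEnd ℂ) (φ x) := by
  have h1 : (φ 1).im = 0 := (Complex.le_def.1 hφ.apply_one_nonneg).2.symm
  -- the forms at the points `(1, x)` with weights `(1, 1)` and `(1, i)` are real, which forces
  -- `Im (φ x + φ x⁻¹) = 0` and `Re (φ x - φ x⁻¹) = 0`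
  have k1 := (Complex.le_def.1 (hφ 2 ![1, x] ![1, 1])).2
  have k2 := (Complex.le_def.1 (hφ 2 ![1, x] ![1, Complex.I])).2
  simp [Fin.sum_univ_two, h1] at k1 k2
  apply Complex.ext <;> simp <;> linarith

lemma isHermitian_kernelMatrix (hφ : IsPositiveType φ) (g : ι → K) :
    (kernelMatrix φ g).IsHermitian := by
  refine IsHermitian.ext fun i j => ?_
  simp only [kernelMatrix, of_apply, Complex.star_def, ← hφ.apply_inv, _root_.mul_inv_rev, inv_inv]

lemma posSemidef_kernelMatrix [Fintype ι] (hφ : IsPositiveType φ) (g : ι → K) :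
    (kernelMatrix φ g).PosSemidef := by
  let e := Fintype.equivFin ι
  have hfin : (kernelMatrix φ (g ∘ e.symm)).PosSemidef :=
    posSemidef_iff_dotProduct_mulVec.2 ⟨hφ.isHermitian_kernelMatrix _, fun c =>
      star_dotProduct_kernelMatrix_mulVec φ _ c ▸ hφ _ _ c⟩
  convert hfin.submatrix e
  ext i j
  simp [kernelMatrix]

lemma sum_nonneg [Fintype ι] (hφ : IsPositiveType φ) (g : ι → K) (c : ι → ℂ) :
    0 ≤ ∑ i, ∑ j, (starRingEnd ℂ) (c i) * c j * φ ((g i)⁻¹ * g j) :=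
  star_dotProduct_kernelMatrix_mulVec φ g c ▸
    (hφ.posSemidef_kernelMatrix g).dotProduct_mulVec_nonneg c

lemma mul (hφ : IsPositiveType φ) (hψ : IsPositiveType ψ) : IsPositiveType (φ * ψ) :=
  isPositiveType_of_posSemidef fun _ g =>
    (hφ.posSemidef_kernelMatrix g).hadamard (hψ.posSemidef_kernelMatrix g)

lemma comp_monoidHom {L : Type*} [Group L] {φ : L → ℂ} (hφ : IsPositiveType φ) (f : K →* L) :
    IsPositiveType (φ ∘ f) := fun n g c => by
  simpa [map_mul, map_inv] using hφ n (f ∘ g) c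

lemma const_mul (hφ : IsPositiveType φ) {a : ℂ} (ha : 0 ≤ a) :
    IsPositiveType fun x => a * φ x := fun n g c => by
  have key : ∑ i : Fin n, ∑ j : Fin n, (starRingEnd ℂ) (c i) * c j * (a * φ ((g i)⁻¹ * g j)) =
      a * ∑ i : Fin n, ∑ j : Fin n, (starRingEnd ℂ) (c i) * c j * φ ((g i)⁻¹ * g j) := by
    simp only [Finset.mul_sum]
    exact Fintype.sum_congr _ _ fun i => Fintype.sum_congr _ _ fun j => by ring
  exact key ▸ mul_nonneg ha (hφ n g c)

lemma sum_snd {G H : Type*} [Group G] [Group H] [Fintype H] {χ : G × H → ℂ}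
    (hχ : IsPositiveType χ) : IsPositiveType fun g => ∑ h : H, χ (g, h) := fun n g c => by
  set Q := ∑ i : Fin n, ∑ j : Fin n, (starRingEnd ℂ) (c i) * c j *
    ∑ h : H, χ ((g i)⁻¹ * g j, h)
  -- test `χ` on the points `(g i, h)` with weights `c i`; the sum over `h⁻¹ * h'` repeats
  -- each `k : H` exactly `|H|` times
  have hsum : 0 ≤ (Fintype.card H : ℂ) * Q := by
    have hpos := hχ.sum_nonneg (fun p : Fin n × H => (g p.1, p.2)) (fun p => c p.1)
    have hshift : ∀ f : H → ℂ, ∑ h : H, ∑ h' : H, f (h⁻¹ * h') = Fintype.card H * ∑ k, f k :=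
      fun f => (Fintype.sum_congr _ _ fun h => Equiv.sum_comp (Equiv.mulLeft h⁻¹) f).trans
        (by simp)
    convert hpos using 1
    simp only [Fintype.sum_prod_type, Prod.inv_mk, Prod.mk_mul_mk, Q]
    rw [Finset.mul_sum]
    refine Fintype.sum_congr _ _ fun i => ?_
    rw [Finset.mul_sum, Finset.sum_comm]
    refine Fintype.sum_congr _ _ fun j => ?_
    rw [hshift fun k => (starRingEnd ℂ) (c i) * c j * χ ((g i)⁻¹ * g j, k), Finset.mul_sum]
  have hcard : (0 : ℂ) < Fintype.card H := by exact_mod_cast Fintype.card_pos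
  simpa [Q, inv_mul_cancel_left₀ hcard.ne'] using mul_nonneg (inv_nonneg_of_nonneg hcard.le) hsum

end IsPositiveType

end PositiveType

theorem stmt10 (G H : Type*) [Group G] [Group H] [Fintype H]
    (φ : H → ℂ) (ψ : G × H → ℂ) (hφ : IsCharacter φ) (hψ : IsCharacter ψ)
    (hB : (∑ h : H, ψ (1, h) * φ h) ≠ 0) :
    IsCharacter (fun g => (∑ h : H, ψ (1, h) * φ h)⁻¹ * ∑ h : H, ψ (g, h) * φ h) := by
  have hχ : IsPositiveType fun p : G × H => ψ p * φ p.2 :=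
    hψ.1.mul (hφ.1.comp_monoidHom (MonoidHom.snd G H))
  have hF := hχ.sum_snd
  refine ⟨hF.const_mul (inv_nonneg_of_nonneg hF.apply_one_nonneg), fun g k => ?_,
    inv_mul_cancel₀ hB⟩
  simp only
  congr 1
  refine Fintype.sum_congr _ _ fun h => ?_
  simpa using congrArg (· * φ h) (hψ.2.1 (g, h) (k, 1))
end

section
/- Let G be a group, H ≤ G a finite subgroup, and N₁ ⊇ N₂ ⊇ … a decreasing sequence of normal subgroups of G with ⋂_k N_k = {1} and N_k ∩ H = {1} for all k. Then for every x ∈ G, lim_{k→∞} [G/N_k : C_{G/N_k}(x N_k)] = [G : C_G(x)], where both sides may be infinite (the limit being ∞ means the indices tend to infinity). -/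
/-!
The index of the centralizer of `x` is the size of the conjugacy class of `x`, and the
conjugacy class of `x N_k` is the image of that of `x` under `G → G/N_k`. As the `N_k` decrease
to the trivial group, this map is eventually injective on every finite set of conjugates of `x`,
so the sizes of the images converge to the size of the class, whether it is finite or not.
-/

open scoped Classical in
/-- The index of a subgroup, valued in `ℕ∞`, with `⊤` for infinite index. -/
noncomputable def extIndex {G : Type*} [Group G] (K : Subgroup G) : ℕ∞ :=
  if K.FiniteIndex then (K.index : ℕ∞) else ⊤

open Filter MulAction

section extIndex

variable {G G' : Type*} [Group G] [Group G']

theorem extIndex_eq_enatCard_quotient (K : Subgroup G) : extIndex K = ENat.card (G ⧸ K) := by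
  unfold extIndex
  split_ifs with h
  · have : Finite (G ⧸ K) := Subgroup.finiteIndex_iff_finite_quotient.mp h
    rw [ENat.card_eq_coe_natCard, Subgroup.index]
  · have : Infinite (G ⧸ K) := not_finite_iff_infinite.mp
      (mt Subgroup.finiteIndex_iff_finite_quotient.mpr h)
    exact ENat.card_eq_top_of_infinite.symm

theorem extIndex_comap_of_surjective {f : G →* G'} (hf : Function.Surjective f)
    (K : Subgroup G') : extIndex (K.comap f) = extIndex K := by
  simp only [extIndex, Subgroup.finiteIndex_iff, Subgroup.index_comap_of_surjective K hf]

theorem extIndex_centralizer_eq_encard_orbit (y : G) :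
    extIndex (Subgroup.centralizer {y}) = (orbit (ConjAct G) y).encard := by
  rw [Subgroup.centralizer_eq_comap_stabilizer]
  refine (extIndex_comap_of_surjective ConjAct.toConjAct.surjective _).trans ?_
  rw [extIndex_eq_enatCard_quotient]
  exact ENat.card_congr (orbitEquivQuotientStabilizer (ConjAct G) y).symm

end extIndex

theorem MonoidHom.image_orbit_conjAct_of_surjective {G G' : Type*} [Group G] [Group G']
    {f : G →* G'} (hf : Function.Surjective f) (x : G) :
    f '' orbit (ConjAct G) x = orbit (ConjAct G') (f x) := by
  ext z
  simp only [Set.mem_image, ConjAct.mem_orbit_conjAct]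
  constructor
  · rintro ⟨a, ha, rfl⟩
    exact f.map_isConj ha
  · intro hz
    obtain ⟨c, hc⟩ := isConj_iff.mp hz
    obtain ⟨d, rfl⟩ := hf c
    refine ⟨d⁻¹ * x * d, isConj_iff.mpr ⟨d, by group⟩, ?_⟩
    rw [map_mul, map_mul, map_inv, ← hc]
    group

theorem Set.tendsto_encard_image_of_eventually_injOn {α ι : Type*} {β : ι → Type*}
    {l : Filter ι} (π : ∀ i, α → β i) (s : Set α)
    (hπ : ∀ T ⊆ s, T.Finite → ∀ᶠ i in l, T.InjOn (π i)) :
    Tendsto (fun i => (π i '' s).encard) l (nhds s.encard) := by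
  refine tendsto_order.mpr ⟨fun b hb => ?_, fun b hb =>
    Eventually.of_forall fun i => (encard_image_le (π i) s).trans_lt hb⟩
  lift b to ℕ using hb.ne_top
  obtain ⟨T, hTs, hT⟩ := exists_subset_encard_eq (Order.add_one_le_of_lt hb)
  have hTfin : T.Finite := finite_of_encard_eq_coe (k := b + 1) (hT.trans (by norm_cast))
  filter_upwards [hπ T hTs hTfin] with i hi
  calc (b : ℕ∞) < b + 1 := by exact_mod_cast Nat.lt_succ_self b
    _ = (π i '' T).encard := by rw [hi.encard_image, hT]
    _ ≤ (π i '' s).encard := encard_le_encard (image_mono hTs)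

section chain

variable {G ι : Type*} [Group G] [Preorder ι] {N : ι → Subgroup G}

theorem Subgroup.eventually_notMem_of_antitone_of_iInf_eq_bot (hN : Antitone N)
    (hint : ⨅ i, N i = ⊥) {g : G} (hg : g ≠ 1) : ∀ᶠ i in atTop, g ∉ N i := by
  obtain ⟨i, hi⟩ : ∃ i, g ∉ N i := by
    by_contra! h
    exact hg (by simpa [hint] using Subgroup.mem_iInf.mpr h)
  exact (eventually_ge_atTop i).mono fun j hij hgj => hi (hN hij hgj)

theorem QuotientGroup.eventually_injOn_mk_of_antitone_of_iInf_eq_bot (hN : Antitone N)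
    (hint : ⨅ i, N i = ⊥) {T : Set G} (hT : T.Finite) :
    ∀ᶠ i in atTop, T.InjOn (QuotientGroup.mk : G → G ⧸ N i) := by
  have hpairs : ∀ p ∈ T ×ˢ T, ∀ᶠ i in atTop,
      (QuotientGroup.mk p.1 : G ⧸ N i) = QuotientGroup.mk p.2 → p.1 = p.2 := by
    rintro ⟨a, b⟩ -
    by_cases hab : a = b
    · exact Eventually.of_forall fun _ _ => hab
    · have hne : a⁻¹ * b ≠ 1 := mt inv_mul_eq_one.mp hab
      filter_upwards [Subgroup.eventually_notMem_of_antitone_of_iInf_eq_bot hN hint hne]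
        with i hi heq
      exact absurd (QuotientGroup.eq.mp heq) hi
  filter_upwards [(eventually_all_finite (hT.prod hT)).mpr hpairs] with i hi a ha b hb
  exact hi (a, b) ⟨ha, hb⟩

end chain

theorem stmt12_general (G : Type*) [Group G]
    (N : ℕ → Subgroup G) [hnorm : ∀ k, (N k).Normal]
    (hdec : ∀ k l, k ≤ l → N l ≤ N k)
    (hint : ⨅ k, N k = ⊥) (x : G) :
    Filter.Tendsto
      (fun k => extIndex (Subgroup.centralizer {(QuotientGroup.mk x : G ⧸ N k)}))
      Filter.atTop (nhds (extIndex (Subgroup.centralizer {x}))) := by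
  have hN : Antitone N := fun k l hkl => hdec k l hkl
  rw [extIndex_centralizer_eq_encard_orbit]
  refine (Set.tendsto_encard_image_of_eventually_injOn _ _ fun T _ hT =>
    QuotientGroup.eventually_injOn_mk_of_antitone_of_iInf_eq_bot hN hint hT).congr fun k => ?_
  rw [extIndex_centralizer_eq_encard_orbit]
  exact congrArg Set.encard
    (MonoidHom.image_orbit_conjAct_of_surjective (QuotientGroup.mk'_surjective (N k)) x)

theorem stmt12 (G : Type*) [Group G] (H : Subgroup G) [Finite H]
    (N : ℕ → Subgroup G) [hnorm : ∀ k, (N k).Normal]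
    (hdec : ∀ k l, k ≤ l → N l ≤ N k)
    (hint : ⨅ k, N k = ⊥)
    (hNH : ∀ k, N k ⊓ H = ⊥) (x : G) :
    Filter.Tendsto
      (fun k => extIndex (Subgroup.centralizer {(QuotientGroup.mk x : G ⧸ N k)}))
      Filter.atTop (nhds (extIndex (Subgroup.centralizer {x}))) :=
  stmt12_general G N (hnorm := hnorm) hdec hint x
end

section
/- Let D_∞ = ℤ ⋊ {±1} be the infinite dihedral group and Γ_m = mℤ ⋊ {±1} ≤ D_∞. Then for all k ∈ ℤ and ε ∈ {±1}, the number of cosets f ∈ D_∞/Γ_m with f^{-1}(k,ε)f ∈ Γ_m equals: m if ε = 1 and m | k; gcd(2,m) if ε = −1 and gcd(2,m) | k; and 0 otherwise. Consequently, the normalized fixed-point counts |{f ∈ D_∞/Γ_m : f^{-1}(k,ε)f ∈ Γ_m}| / m tend, as m → ∞, to 1 if (k,ε)=(0,1) and to 0 otherwise; i.e., the sequence (Γ_m) is a Farber sequence in D_∞. -/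
/-!
`D∞` acts on `ZMod m` by the affine maps `x ↦ k + ε x`, and `Γ_m` is the stabilizer of `0`.
As the action is transitive, `f ↦ f • 0` identifies `D∞ ⧸ Γ_m` with `ZMod m`, and
`f⁻¹ g f ∈ Γ_m` says exactly that `g` fixes `f • 0`. So the count is the number of fixed points
of `x ↦ k + ε x`, i.e. of solutions of `(1 - ε) x = k` in `ZMod m`. For `d = 1 - ε ∈ {0, 2}`,
the solution set of `d x = k` is empty or a coset of the kernel of multiplication by `d`, which
has `gcd d m` elements in the cyclic group `ZMod m`. Hence, once `m > |k|`, the count is `m` for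
the identity and at most `2` otherwise, which gives the limits.
-/

/-- The action of `{±1} = ℤˣ` on `ℤ` (written multiplicatively), used to build the
infinite dihedral group `D∞ = ℤ ⋊ {±1}`. -/
def dihedralAut : ℤˣ →* MulAut (Multiplicative ℤ) where
  toFun ε := AddEquiv.toMultiplicative (DistribMulAction.toAddAut ℤˣ ℤ ε)
  map_one' := by
    ext x
    show Multiplicative.ofAdd ((1 : ℤˣ) • Multiplicative.toAdd x) = x
    simp
  map_mul' a b := by
    ext x
    show Multiplicative.ofAdd ((a * b : ℤˣ) • Multiplicative.toAdd x) =
      Multiplicative.ofAdd (a • (b : ℤˣ) • Multiplicative.toAdd x)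
    rw [mul_smul]

/-- The infinite dihedral group `D∞ = ℤ ⋊ {±1}`. -/
abbrev DInf : Type := SemidirectProduct (Multiplicative ℤ) ℤˣ dihedralAut

lemma dihedralAut_toAdd (ε : ℤˣ) (l : Multiplicative ℤ) :
    Multiplicative.toAdd (dihedralAut ε l) = (ε : ℤ) * Multiplicative.toAdd l := rfl

/-- The subgroup `Γ_m = mℤ ⋊ {±1}` of `D∞`. -/
def DihedralSub (m : ℕ) : Subgroup DInf where
  carrier := {x | (m : ℤ) ∣ Multiplicative.toAdd (SemidirectProduct.left x)}
  mul_mem' := by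
    intro a b ha hb
    simp only [Set.mem_setOf_eq, SemidirectProduct.mul_left, toAdd_mul] at *
    exact dvd_add ha (by rw [dihedralAut_toAdd]; exact hb.mul_left _)
  one_mem' := by
    simp only [Set.mem_setOf_eq, SemidirectProduct.one_left, toAdd_one]
    exact dvd_zero _
  inv_mem' := by
    intro a ha
    simp only [Set.mem_setOf_eq, SemidirectProduct.inv_left, dihedralAut_toAdd,
      toAdd_inv] at *
    exact (ha.neg_right).mul_left _

open MulAction Multiplicative Filter Topology

theorem ZMod.exists_natCast_mul_eq_intCast_iff (m d : ℕ) (k : ℤ) :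
    (∃ x : ZMod m, (d : ZMod m) * x = k) ↔ (d.gcd m : ℤ) ∣ k := by
  rw [← Int.gcd_natCast_natCast, Int.coe_gcd, gcd_dvd_iff_exists]
  constructor
  · rintro ⟨x, hx⟩
    obtain ⟨y, rfl⟩ := ZMod.intCast_surjective x
    obtain ⟨t, ht⟩ :=
      (ZMod.intCast_eq_intCast_iff_dvd_sub (d * y) k m).mp (by push_cast; exact hx)
    exact ⟨y, t, by linarith⟩
  · rintro ⟨y, t, rfl⟩
    exact ⟨y, by push_cast; simp⟩

theorem ZMod.card_natCast_mul_eq_intCast (m d : ℕ) [NeZero m] (k : ℤ) :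
    Nat.card {x : ZMod m // (d : ZMod m) * x = k} = if (d.gcd m : ℤ) ∣ k then d.gcd m else 0 := by
  split_ifs with hk
  · obtain ⟨x₀, hx₀⟩ := (exists_natCast_mul_eq_intCast_iff m d k).mpr hk
    let f : ZMod m →+ ZMod m := nsmulAddMonoidHom d
    calc Nat.card {x : ZMod m // (d : ZMod m) * x = k}
        = Nat.card (f ⁻¹' {f x₀}) :=
          Nat.card_congr (Equiv.subtypeEquivRight fun x => by simp [f, nsmul_eq_mul, hx₀])
      _ = Nat.card f.ker := Nat.card_congr (f.fiberEquivKer x₀)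
      _ = d.gcd m := by
          rw [IsAddCyclic.card_nsmulAddMonoidHom_ker, Nat.card_zmod, Nat.gcd_comm]
  · have : IsEmpty {x : ZMod m // (d : ZMod m) * x = k} :=
      ⟨fun x => hk ((exists_natCast_mul_eq_intCast_iff m d k).mp ⟨x.1, x.2⟩)⟩
    exact Nat.card_of_isEmpty

theorem MulAction.card_conj_mem_stabilizer {G α : Type*} [Group G] [MulAction G α]
    [IsPretransitive G α] (a : α) (g : G) :
    Nat.card {c : G ⧸ stabilizer G a // c.out⁻¹ * g * c.out ∈ stabilizer G a} =
      Nat.card (fixedBy α g) := by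
  let e : G ⧸ stabilizer G a ≃ α := Equiv.ofBijective (ofQuotientStabilizer G a)
    ⟨injective_ofQuotientStabilizer G a, fun b => by
      obtain ⟨h, rfl⟩ := exists_smul_eq G a b
      exact ⟨h, rfl⟩⟩
  refine Nat.card_congr (e.subtypeEquiv fun c => ?_)
  have hc : e c = c.out • a := by
    conv_lhs => rw [← QuotientGroup.out_eq' c]
    rfl
  rw [mem_stabilizer_iff, mul_smul, mul_smul, inv_smul_eq_iff, hc]
  rfl

instance (m : ℕ) : MulAction DInf (ZMod m) where
  smul g x := ((toAdd g.left : ℤ) : ZMod m) + (g.right : ℤ) * x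
  one_smul x := by
    show ((0 : ℤ) : ZMod m) + ((1 : ℤˣ) : ℤ) * x = x
    simp
  mul_smul g h x := by
    show ((toAdd g.left + g.right * toAdd h.left : ℤ) : ZMod m) +
        ((g.right * h.right : ℤˣ) : ℤ) * x =
      ((toAdd g.left : ℤ) : ZMod m) +
        (g.right : ℤ) * (((toAdd h.left : ℤ) : ZMod m) + (h.right : ℤ) * x)
    push_cast
    ring

theorem DInf.smul_def (m : ℕ) (g : DInf) (x : ZMod m) :
    g • x = ((toAdd g.left : ℤ) : ZMod m) + (g.right : ℤ) * x := rfl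

instance (m : ℕ) : IsPretransitive DInf (ZMod m) where
  exists_smul_eq x y := by
    obtain ⟨z, hz⟩ := ZMod.intCast_surjective (y - x)
    exact ⟨⟨ofAdd z, 1⟩, by simp [DInf.smul_def, hz]⟩

theorem stabilizer_zero_eq_dihedralSub (m : ℕ) : stabilizer DInf (0 : ZMod m) = DihedralSub m := by
  ext g
  rw [mem_stabilizer_iff, DInf.smul_def, mul_zero, add_zero, ZMod.intCast_zmod_eq_zero_iff_dvd]
  rfl

theorem card_conj_mem_dihedralSub (m : ℕ) (k : ℤ) (ε : ℤˣ) :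
    Nat.card {c : DInf ⧸ DihedralSub m //
        (Quotient.out c)⁻¹ * (⟨ofAdd k, ε⟩ : DInf) * Quotient.out c ∈ DihedralSub m} =
      Nat.card (fixedBy (ZMod m) (⟨ofAdd k, ε⟩ : DInf)) := by
  rw [← stabilizer_zero_eq_dihedralSub, card_conj_mem_stabilizer]

theorem card_fixedBy_dihedral (m : ℕ) [NeZero m] (k : ℤ) (ε : ℤˣ) :
    Nat.card (fixedBy (ZMod m) (⟨ofAdd k, ε⟩ : DInf)) =
      if ε = 1 ∧ (m : ℤ) ∣ k then m
      else if ε = -1 ∧ (Nat.gcd 2 m : ℤ) ∣ k then Nat.gcd 2 m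
      else 0 := by
  have card_eq (d : ℕ) (hd : 1 - (ε : ℤ) = d) :
      Nat.card (fixedBy (ZMod m) (⟨ofAdd k, ε⟩ : DInf)) =
        if (d.gcd m : ℤ) ∣ k then d.gcd m else 0 := by
    rw [← ZMod.card_natCast_mul_eq_intCast]
    refine Nat.card_congr (Equiv.subtypeEquivRight fun x => ?_)
    rw [mem_fixedBy, DInf.smul_def, toAdd_ofAdd, ← Int.cast_natCast, ← hd]
    push_cast
    constructor <;> intro h <;> linear_combination -h
  rcases Int.units_eq_one_or ε with rfl | rfl
  · rw [card_eq 0 (by simp)]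
    simp
  · rw [card_eq 2 (by simp)]
    simp

theorem card_fixedBy_dihedral_le_two {m : ℕ} {k : ℤ} {ε : ℤˣ} (hkm : k.natAbs < m)
    (hkε : ¬(k = 0 ∧ ε = 1)) : Nat.card (fixedBy (ZMod m) (⟨ofAdd k, ε⟩ : DInf)) ≤ 2 := by
  have : NeZero m := NeZero.of_pos (by omega)
  rw [card_fixedBy_dihedral]
  rcases Int.units_eq_one_or ε with rfl | rfl
  · have hk : k ≠ 0 := by tauto
    have : ¬(m : ℤ) ∣ k := fun h =>
      hk (Int.eq_zero_of_dvd_of_natAbs_lt_natAbs h (by rwa [Int.natAbs_natCast]))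
    simp [this]
  · have : (-1 : ℤˣ) ≠ 1 := by decide
    rw [if_neg (by tauto)]
    split_ifs
    exacts [Nat.gcd_le_left m two_pos, Nat.zero_le 2]

theorem tendsto_card_fixedBy_dihedral_div (k : ℤ) (ε : ℤˣ) :
    Tendsto (fun m : ℕ => (Nat.card (fixedBy (ZMod m) (⟨ofAdd k, ε⟩ : DInf)) : ℝ) / m) atTop
      (𝓝 (if k = 0 ∧ ε = 1 then 1 else 0)) := by
  split_ifs with hkε
  · obtain ⟨rfl, rfl⟩ := hkε
    refine tendsto_const_nhds.congr' ?_
    filter_upwards [eventually_gt_atTop 0] with m hm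
    have : NeZero m := NeZero.of_pos hm
    rw [card_fixedBy_dihedral]
    simp [hm.ne']
  · refine squeeze_zero' (.of_forall fun m => by positivity) ?_
      (tendsto_const_div_atTop_nhds_zero_nat 2)
    filter_upwards [eventually_gt_atTop k.natAbs] with m hm
    gcongr
    exact_mod_cast card_fixedBy_dihedral_le_two hm hkε

theorem stmt19 :
    (∀ (m : ℕ), 0 < m → ∀ (k : ℤ) (ε : ℤˣ),
      Nat.card {c : DInf ⧸ DihedralSub m //
          (Quotient.out c)⁻¹ * (⟨Multiplicative.ofAdd k, ε⟩ : DInf) * Quotient.out c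
            ∈ DihedralSub m}
        = if ε = 1 ∧ (m : ℤ) ∣ k then m
          else if ε = -1 ∧ ((Nat.gcd 2 m : ℤ)) ∣ k then Nat.gcd 2 m
          else 0) ∧
    (∀ (k : ℤ) (ε : ℤˣ),
      Filter.Tendsto
        (fun m : ℕ =>
          (Nat.card {c : DInf ⧸ DihedralSub m //
              (Quotient.out c)⁻¹ * (⟨Multiplicative.ofAdd k, ε⟩ : DInf) * Quotient.out c
                ∈ DihedralSub m} : ℝ) / m)
        Filter.atTop
        (nhds (if k = 0 ∧ ε = 1 then 1 else 0))) := by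
  refine ⟨fun m hm k ε => ?_, fun k ε => ?_⟩
  · have : NeZero m := NeZero.of_pos hm
    rw [card_conj_mem_dihedralSub, card_fixedBy_dihedral]
  · refine (tendsto_card_fixedBy_dihedral_div k ε).congr fun m => ?_
    rw [card_conj_mem_dihedralSub]
end
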